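/- Let X be a topological space and 𝒜 an arrangement on X satisfying the no-coordinate-axis hypothesis, and let S be a finite set with added element *. Then the set {B ∈ P_𝒜(S ⊔ {*}) ∣ there exists a nonempty A ∈ P_𝒜(S) with B = A × X} is a lower set (order ideal) of the poset P_𝒜(S ⊔ {*}) ordered by reverse inclusion: if B ⊇ A × X for some nonempty A ∈ P_𝒜(S) and B ∈ P_𝒜(S ⊔ {*}), then B itself has the form B = B' × X with B' ∈ P_𝒜(S) nonempty. -/

import Mathlib

open scoped Classical

/-- An arrangement `𝒜` on a topological space `X`: a finite index set `I` and,
for each `i ∈ I`, a finite set `S i` together with a closed subset `A i ⊆ X^{S i}`. -/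
structure Arrangement (X : Type*) [TopologicalSpace X] where
  I : Type*
  [fintypeI : Fintype I]
  S : I → Type*
  [fintypeS : ∀ i, Fintype (S i)]
  A : ∀ i, Set (S i → X)
  closedA : ∀ i, IsClosed (A i)

/-- A generator of `𝒜` on a finite set `T`: a subset of `X^T` of the form
`{f : T → X | f ∘ j ∈ A i}` for some `i` and some injection `j : S i → T`. -/
def IsGenerator {X : Type*} [TopologicalSpace X] (𝒜 : Arrangement X) (T : Type*)
    (G : Set (T → X)) : Prop :=
  ∃ (i : 𝒜.I) (j : 𝒜.S i → T), Function.Injective j ∧ G = {f : T → X | f ∘ j ∈ 𝒜.A i}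

/-- Membership in the poset `P_𝒜(T)`: the subsets of `X^T` that are intersections of
(possibly empty) families of generators of `𝒜` on `T` (the empty intersection is all of `X^T`). -/
def InPoset {X : Type*} [TopologicalSpace X] (𝒜 : Arrangement X) (T : Type*)
    (B : Set (T → X)) : Prop :=
  ∃ 𝒢 : Set (Set (T → X)), (∀ G ∈ 𝒢, IsGenerator 𝒜 T G) ∧ B = ⋂₀ 𝒢

/-- The no-coordinate-axis hypothesis: for every `i`, every `s ∈ S i` and every
`x̄ : S i → X` there is `y : X` such that changing the value of `x̄` at `s` to `y`
gives a function not in `A i`. -/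
def NoAxis {X : Type*} [TopologicalSpace X] (𝒜 : Arrangement X) : Prop :=
  ∀ (i : 𝒜.I) (s : 𝒜.S i) (x : 𝒜.S i → X), ∃ y : X,
    (fun t => if t = s then y else x t) ∉ 𝒜.A i

/-- For `A ⊆ X^S`, the set `A × X ⊆ X^{S ⊔ {*}}`, realizing `S ⊔ {*}` as `Option S`
with `*` the element `none`. -/
def cyl {X S : Type*} (A : Set (S → X)) : Set (Option S → X) :=
  {f | (fun s => f (some s)) ∈ A}

/-!
Let `B = ⋂ G` be an intersection of generators on `S ⊔ {*}` containing `A × X`, with `A`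
nonempty. A generator `G = {f | f ∘ j ∈ A i}` with `* = j s` cannot contain `A × X`: starting
from a point of `A × X` and moving only its `*`-coordinate stays in `A × X`, while the
no-coordinate-axis hypothesis lets that move leave `A i`. So every `G` is `G' × X` for a generator
`G'` on `S`, and `B = (⋂ G') × X`; the intersection `⋂ G'` contains `A` and is nonempty.
-/

theorem cyl_subset_cyl_iff {X S : Type*} [Nonempty X] {A A' : Set (S → X)} :
    cyl A ⊆ cyl A' ↔ A ⊆ A' := by
  refine ⟨fun h a ha => ?_, fun h f hf => h hf⟩
  obtain ⟨x⟩ := ‹Nonempty X›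
  exact h (show (fun o : Option S => o.elim x a) ∈ cyl A from ha)

theorem Set.Nonempty.cyl {X S : Type*} [Nonempty X] {A : Set (S → X)} (hA : A.Nonempty) :
    (cyl A).Nonempty := by
  obtain ⟨a, ha⟩ := hA
  obtain ⟨x⟩ := ‹Nonempty X›
  exact ⟨fun o => o.elim x a, ha⟩

section

variable {X : Type*} [TopologicalSpace X] {𝒜 : Arrangement X} {S : Type*}

theorem NoAxis.ne_none_of_cyl_subset (hax : NoAxis 𝒜) {i : 𝒜.I} {j : 𝒜.S i → Option S}
    (hj : Function.Injective j) {A : Set (S → X)} {f : Option S → X} (hf : f ∈ cyl A)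
    (hsub : cyl A ⊆ {g | g ∘ j ∈ 𝒜.A i}) (t : 𝒜.S i) : j t ≠ none := by
  intro ht
  obtain ⟨y, hy⟩ := hax i t (f ∘ j)
  have hmoved : Function.update f none y ∈ cyl A := by simpa [cyl] using hf
  have := hsub hmoved
  rw [Set.mem_ofPred_eq, ← ht, Function.update_comp_eq_of_injective _ hj] at this
  exact hy (by convert this using 1; funext s; simp only [Function.update_apply, Function.comp_apply])

theorem IsGenerator.exists_eq_cyl_of_cyl_subset (hax : NoAxis 𝒜) {G : Set (Option S → X)}
    (hG : IsGenerator 𝒜 (Option S) G) {A : Set (S → X)} (hA : (cyl A).Nonempty)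
    (hsub : cyl A ⊆ G) : ∃ G', IsGenerator 𝒜 S G' ∧ G = cyl G' := by
  obtain ⟨i, j, hj, rfl⟩ := hG
  obtain ⟨f, hf⟩ := hA
  have hsome (t : 𝒜.S i) : ∃ s, j t = some s :=
    Option.ne_none_iff_exists'.mp (hax.ne_none_of_cyl_subset hj hf hsub t)
  choose j' hj' using hsome
  obtain rfl : j = some ∘ j' := funext hj'
  exact ⟨_, ⟨i, j', hj.of_comp, rfl⟩, rfl⟩

theorem exists_inPoset_sInter_eq_cyl {𝒢 : Set (Set (Option S → X))}
    (h𝒢 : ∀ G ∈ 𝒢, ∃ G', IsGenerator 𝒜 S G' ∧ G = cyl G') :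
    ∃ B', InPoset 𝒜 S B' ∧ ⋂₀ 𝒢 = cyl B' := by
  refine ⟨⋂₀ {G' | IsGenerator 𝒜 S G' ∧ cyl G' ∈ 𝒢}, ⟨_, fun _ hG' => hG'.1, rfl⟩, ?_⟩
  ext f
  constructor
  · exact fun hf G' hG' => hf _ hG'.2
  · intro hf G hG
    obtain ⟨G', hG', rfl⟩ := h𝒢 G hG
    exact hf G' ⟨hG', hG⟩

end

theorem image_isLowerSet_general {X : Type*} [TopologicalSpace X] (𝒜 : Arrangement X)
    (hax : NoAxis 𝒜) (S : Type*)
    (B : Set (Option S → X)) (hB : InPoset 𝒜 (Option S) B)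
    (A : Set (S → X)) (hA : InPoset 𝒜 S A) (hAne : A.Nonempty)
    (hsub : cyl A ⊆ B) :
    ∃ B' : Set (S → X), InPoset 𝒜 S B' ∧ B'.Nonempty ∧ B = cyl B' := by
  cases isEmpty_or_nonempty X
  · exact ⟨A, hA, hAne, Subsingleton.elim _ _⟩
  obtain ⟨𝒢, h𝒢, rfl⟩ := hB
  have hcyl : ∀ G ∈ 𝒢, ∃ G', IsGenerator 𝒜 S G' ∧ G = cyl G' := fun G hG =>
    (h𝒢 G hG).exists_eq_cyl_of_cyl_subset hax hAne.cyl (hsub.trans (Set.sInter_subset_of_mem hG))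
  obtain ⟨B', hB', hB'eq⟩ := exists_inPoset_sInter_eq_cyl hcyl
  rw [hB'eq, cyl_subset_cyl_iff] at hsub
  exact ⟨B', hB', hAne.mono hsub, hB'eq⟩

/-- Under the no-coordinate-axis hypothesis, the image of the nonempty part of `P_𝒜(S)`
under multiplication by `0̂ ∈ P_𝒜({*})` is a lower set of `P_𝒜(S ⊔ {*})` for reverse
inclusion: if `B ∈ P_𝒜(S ⊔ {*})` and `B ⊇ A × X` for some nonempty `A ∈ P_𝒜(S)`, then
`B = B' × X` for some nonempty `B' ∈ P_𝒜(S)`. -/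
theorem image_isLowerSet {X : Type*} [TopologicalSpace X] (𝒜 : Arrangement X)
    (hax : NoAxis 𝒜) (S : Type*) [Fintype S]
    (B : Set (Option S → X)) (hB : InPoset 𝒜 (Option S) B)
    (A : Set (S → X)) (hA : InPoset 𝒜 S A) (hAne : A.Nonempty)
    (hsub : cyl A ⊆ B) :
    ∃ B' : Set (S → X), InPoset 𝒜 S B' ∧ B'.Nonempty ∧ B = cyl B' :=
  image_isLowerSet_general 𝒜 hax S B hB A hA hAne hsub
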